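/- arXiv:2101.11233 — 5 statements merged into one kernel-verified Lean document; each statement's English description precedes it below -/
import Mathlib

section
/- If x1,x2,x3,x4,x5 are real numbers in [0,1] with x1+x2+x3+x4+x5 = 1 and 3*x1+x2-x3-x4-3*x5 ≥ 0, then x1^2/2 + x2^2/2 + x3^2/2 - 3*x4^2/16 - x5^2/2 + x1*x2 + x1*x3 + x2*x3 + x1*x4/2 + x1*x5/2 - x4*x5/2 ≥ 5/256. -/
/-!
Since `x₁ + x₂ + x₃ = 1 - x₄ - x₅`, the form depends on `x₂, x₃` only through that sum, and it is
increasing in `x₁` with slope `(x₄ + x₅)/2`. The two linear constraints give `x₁ ≥ x₄ + 2x₅ - 1/2`,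
and substituting this lower bound leaves a quadratic in `(x₄, x₅)` on the triangle
`x₄, x₅ ≥ 0`, `2x₄ + 3x₅ ≤ 3/2`, whose minimum `5/256` is attained at the vertex `(3/4, 0)`.
-/

/-- In the coordinates `(t, b)` with `t = 3/2 - 2a - 3b` the only negative coefficient is that of
`b²`, which the linear term in `b` absorbs because `b ≤ 1/2` on the triangle. -/
theorem five_div_256_le_of_two_mul_add_three_mul_le {a b : ℝ} (ha : 0 ≤ a) (hb : 0 ≤ b)
    (hab : 2 * a + 3 * b ≤ 3 / 2) :
    5 / 256 ≤ 1 / 2 - 5 / 4 * (a + b) + 13 / 16 * a ^ 2 + 2 * a * b + b ^ 2 := by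
  set t := 3 / 2 - 2 * a - 3 * b with ht
  have ht0 : 0 ≤ t := by linarith
  have hb' : 0 ≤ 19 - 11 * b := by linarith
  have hdiff : 1 / 2 - 5 / 4 * (a + b) + 13 / 16 * a ^ 2 + 2 * a * b + b ^ 2 - 5 / 256
      = t / 64 + b * (19 - 11 * b) / 64 + 13 * t ^ 2 / 64 + 7 * t * b / 32 := by
    rw [ht]; ring
  have : 0 ≤ t / 64 + b * (19 - 11 * b) / 64 + 13 * t ^ 2 / 64 + 7 * t * b / 32 := by positivity
  linarith

theorem stmt_0_general (x1 x2 x3 x4 x5 : ℝ)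
    (h2 : x2 ∈ Set.Icc (0:ℝ) 1)
    (h3 : x3 ∈ Set.Icc (0:ℝ) 1) (h4 : x4 ∈ Set.Icc (0:ℝ) 1)
    (h5 : x5 ∈ Set.Icc (0:ℝ) 1)
    (hsum : x1 + x2 + x3 + x4 + x5 = 1)
    (hlin : 3*x1 + x2 - x3 - x4 - 3*x5 ≥ 0) :
    x1^2/2 + x2^2/2 + x3^2/2 - 3*x4^2/16 - x5^2/2
      + x1*x2 + x1*x3 + x2*x3 + x1*x4/2 + x1*x5/2 - x4*x5/2 ≥ 5/256 := by
  have hx1 : x4 + 2 * x5 - 1 / 2 ≤ x1 := by linarith [h3.1]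
  have hcap : 2 * x4 + 3 * x5 ≤ 3 / 2 := by linarith [h2.1, h3.1]
  have hslope : (x4 + x5) * (x4 + 2 * x5 - 1 / 2) ≤ (x4 + x5) * x1 :=
    mul_le_mul_of_nonneg_left hx1 (add_nonneg h4.1 h5.1)
  have hmin := five_div_256_le_of_two_mul_add_three_mul_le h4.1 h5.1 hcap
  linear_combination hmin + hslope / 2 - (x1 + x2 + x3 + 1 - x4 - x5) / 2 * hsum

theorem stmt_0 (x1 x2 x3 x4 x5 : ℝ)
    (h1 : x1 ∈ Set.Icc (0:ℝ) 1) (h2 : x2 ∈ Set.Icc (0:ℝ) 1)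
    (h3 : x3 ∈ Set.Icc (0:ℝ) 1) (h4 : x4 ∈ Set.Icc (0:ℝ) 1)
    (h5 : x5 ∈ Set.Icc (0:ℝ) 1)
    (hsum : x1 + x2 + x3 + x4 + x5 = 1)
    (hlin : 3*x1 + x2 - x3 - x4 - 3*x5 ≥ 0) :
    x1^2/2 + x2^2/2 + x3^2/2 - 3*x4^2/16 - x5^2/2
      + x1*x2 + x1*x3 + x2*x3 + x1*x4/2 + x1*x5/2 - x4*x5/2 ≥ 5/256 :=
  stmt_0_general x1 x2 x3 x4 x5 h2 h3 h4 h5 hsum hlin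
end

section
/- Every simple graph G on n ≥ 2 vertices with exactly (1/2)*C(n,2) edges has a vertex u whose degree satisfies n/4 ≤ deg(u) ≤ 3n/4 - 1. -/
/-!
Call a vertex low if its degree is below `n / 4`. The degree sum over the `b` non-low vertices is
at most `b (b - 1)` plus the degree sum over the low ones; when the total degree sum is
`n (n - 1) / 2` this forces `b > n / 2`. A vertex of degree above `3n/4 - 1` is low in the
complement graph, which also has half of all edges. So if no vertex had degree in
`[n/4, 3n/4 - 1]`, fewer than half of the vertices would be low in `G` and fewer than half low in
`Gᶜ`, although every vertex is one or the other.
-/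

open Finset

namespace SimpleGraph

variable {V : Type*} [Fintype V] (G : SimpleGraph V) [DecidableRel G.Adj]

def lowVertices : Finset V := {v | 4 * G.degree v + 1 ≤ Fintype.card V}

lemma mem_lowVertices {v : V} : v ∈ G.lowVertices ↔ 4 * G.degree v + 1 ≤ Fintype.card V := by
  simp [lowVertices]

lemma degree_eq_sum_ite_adj (v : V) : G.degree v = ∑ w, if G.Adj v w then 1 else 0 := by
  rw [← card_neighborFinset_eq_degree, neighborFinset_eq_filter, card_filter]

lemma sum_degree_le_sum_degree_compl_add [DecidableEq V] (t : Finset V) :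
    ∑ v ∈ t, G.degree v ≤ ∑ v ∈ tᶜ, G.degree v + #t * (#t - 1) := by
  have inside (v : V) (hv : v ∈ t) : ∑ w ∈ t, (if G.Adj v w then 1 else 0) ≤ #t - 1 := by
    rw [← card_filter, ← card_erase_of_mem hv]
    exact card_le_card fun w hw ↦
      mem_erase.2 ⟨(G.ne_of_adj (mem_filter.1 hw).2).symm, (mem_filter.1 hw).1⟩
  have outside (w : V) : ∑ v ∈ t, (if G.Adj v w then 1 else 0) ≤ G.degree w := by
    rw [degree_eq_sum_ite_adj]
    simp_rw [G.adj_comm _ w]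
    exact sum_le_sum_of_subset (subset_univ t)
  calc ∑ v ∈ t, G.degree v
      = ∑ v ∈ t, ∑ w ∈ tᶜ, (if G.Adj v w then 1 else 0)
        + ∑ v ∈ t, ∑ w ∈ t, (if G.Adj v w then 1 else 0) := by
        simp_rw [degree_eq_sum_ite_adj, ← sum_add_distrib, ← sum_add_sum_compl t, add_comm]
    _ ≤ ∑ w ∈ tᶜ, G.degree w + ∑ _v ∈ t, (#t - 1) := by
        rw [sum_comm]
        exact add_le_add (sum_le_sum fun w _ ↦ outside w) (sum_le_sum inside)
    _ = ∑ v ∈ tᶜ, G.degree v + #t * (#t - 1) := by rw [sum_const, smul_eq_mul]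

lemma sum_degree_compl_add_sum_degree [DecidableEq V] :
    ∑ v, Gᶜ.degree v + ∑ v, G.degree v = Fintype.card V * (Fintype.card V - 1) := by
  calc ∑ v, Gᶜ.degree v + ∑ v, G.degree v = ∑ _v : V, (Fintype.card V - 1) := by
        rw [← sum_add_distrib]
        refine sum_congr rfl fun v _ ↦ ?_
        have := G.degree_lt_card_verts v
        rw [degree_compl]
        omega
    _ = Fintype.card V * (Fintype.card V - 1) := by rw [sum_const, card_univ, smul_eq_mul]

lemma two_mul_card_lowVertices_lt [DecidableEq V] (hV : 2 ≤ Fintype.card V)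
    (hsum : 2 * ∑ v, G.degree v = Fintype.card V * (Fintype.card V - 1)) :
    2 * #G.lowVertices < Fintype.card V := by
  set n := Fintype.card V
  set A := G.lowVertices
  have hlow : 4 * ∑ v ∈ A, G.degree v + #A ≤ #A * n := by
    calc 4 * ∑ v ∈ A, G.degree v + #A = ∑ v ∈ A, (4 * G.degree v + 1) := by
          rw [sum_add_distrib, mul_sum, sum_const, smul_eq_mul, mul_one]
      _ ≤ ∑ _v ∈ A, n := sum_le_sum fun v hv ↦ G.mem_lowVertices.1 hv
      _ = #A * n := by rw [sum_const, smul_eq_mul]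
  have hhigh := G.sum_degree_le_sum_degree_compl_add Aᶜ
  rw [compl_compl] at hhigh
  have hsplit := sum_add_sum_compl A (G.degree ·)
  have hcard : #A + #Aᶜ = n := card_add_card_compl A
  rcases Nat.eq_zero_or_pos #Aᶜ with hempty | hpos
  · rw [card_eq_zero.1 hempty, sum_empty] at hsplit
    rw [← hsplit, add_zero] at hsum
    rw [(by omega : #A = n)] at hlow
    zify [(by omega : 1 ≤ n)] at hsum hlow
    nlinarith
  · -- `n (n - 1) = 2 ∑ deg ≤ 4 ∑_A deg + 2 b (b - 1) ≤ (n - b) (n - 1) + 2 b (b - 1)`, `b = #Aᶜ`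
    have : #Aᶜ * (n - 1) ≤ #Aᶜ * (2 * (#Aᶜ - 1)) := by
      zify [(by omega : 1 ≤ n), (by omega : 1 ≤ #Aᶜ)] at hsum hlow hhigh hsplit hcard ⊢
      nlinarith
    have := Nat.le_of_mul_le_mul_left this hpos
    omega

lemma mem_lowVertices_or_mem_compl_lowVertices [DecidableEq V] (v : V)
    (hv : (Fintype.card V : ℝ) / 4 ≤ G.degree v → 3 * Fintype.card V / 4 - 1 < (G.degree v : ℝ)) :
    v ∈ G.lowVertices ∨ v ∈ Gᶜ.lowVertices := by
  have hlt := G.degree_lt_card_verts v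
  rw [mem_lowVertices, mem_lowVertices, degree_compl]
  by_cases hle : Fintype.card V ≤ 4 * G.degree v
  · have hle' : (Fintype.card V : ℝ) ≤ 4 * G.degree v := by exact_mod_cast hle
    have hhigh := hv (by linarith)
    have : 3 * Fintype.card V < 4 * G.degree v + 4 := by
      exact_mod_cast (by linarith : (3 * Fintype.card V : ℝ) < 4 * G.degree v + 4)
    omega
  · omega

end SimpleGraph

open SimpleGraph in
theorem stmt_1 (n : ℕ) (hn : 2 ≤ n) (G : SimpleGraph (Fin n)) [DecidableRel G.Adj]
    (hedges : 2 * G.edgeFinset.card = n.choose 2) :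
    ∃ u : Fin n, (n : ℝ)/4 ≤ G.degree u ∧ (G.degree u : ℝ) ≤ 3*n/4 - 1 := by
  by_contra! hextreme
  have hsum : 2 * ∑ v, G.degree v = n * (n - 1) := by
    rw [sum_degrees_eq_twice_card_edges, mul_left_comm, hedges, Nat.choose_two_right,
      Nat.mul_div_cancel' n.even_mul_pred_self.two_dvd]
  have hsumc : 2 * ∑ v, Gᶜ.degree v = n * (n - 1) := by
    have := G.sum_degree_compl_add_sum_degree
    rw [Fintype.card_fin] at this
    omega
  have hcover : (univ : Finset (Fin n)) ⊆ G.lowVertices ∪ Gᶜ.lowVertices := fun v _ ↦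
    mem_union.2 (G.mem_lowVertices_or_mem_compl_lowVertices v (by simpa using hextreme v))
  have hG := G.two_mul_card_lowVertices_lt (by rwa [Fintype.card_fin]) (by simpa using hsum)
  have hGc := Gᶜ.two_mul_card_lowVertices_lt (by rwa [Fintype.card_fin]) (by simpa using hsumc)
  have := (card_le_card hcover).trans (card_union_le _ _)
  simp only [card_univ, Fintype.card_fin] at hG hGc this
  omega
end

section
/- If c : E(K_n) → {-1,1} is an edge labeling of the complete graph K_n with n ≥ 2 such that the sum of all edge labels is 0, then there exists a vertex v such that the absolute value of the sum of the labels of the n-1 edges incident with v is at most n/2 - 1. -/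
/-!
Suppose every star sum satisfies `2 |s v| > n - 2`, hence `2 |s v| ≥ n - 1` by integrality. Let `P`
be the set of vertices with `s v > 0`, of size `p`, and `q = n - p`. By the handshake lemma
`∑ v, s v = 2 ∑ e, c e = 0`, so the star sums over `P` and over `Pᶜ` have the same absolute total
`A`, whence `p (n - 1) ≤ 2 A` and `q (n - 1) ≤ 2 A`. In `∑_{P} s - ∑_{Pᶜ} s = 2 A` the edges
between `P` and `Pᶜ` cancel, leaving twice the label sum inside `P` minus twice that inside `Pᶜ`,
so `2 A ≤ p (p - 1) + q (q - 1)`. Comparing with the lower bounds gives `p q ≤ q (q - 1)` and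
`p q ≤ p (p - 1)`, i.e. `p < q` and `q < p` when both are positive; if one of them is `0`, then
`A = 0`, contradicting the lower bounds.
-/

open Finset

namespace SimpleGraph

variable {V M : Type*} [Fintype V] [DecidableEq V] [AddCommMonoid M]
  (G : SimpleGraph V) [DecidableRel G.Adj]

theorem sum_dart_edge (f : Sym2 V → M) :
    ∑ d : G.Dart, f d.edge = 2 • ∑ e ∈ G.edgeFinset, f e := by
  rw [← sum_fiberwise_of_maps_to (t := G.edgeFinset) (fun d _ => G.mem_edgeFinset.2 d.edge_mem),
    smul_sum]
  refine sum_congr rfl fun e he => ?_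
  rw [sum_congr rfl fun d hd => congrArg f (mem_filter.1 hd).2, sum_const,
    G.dart_edge_fiber_card e (G.mem_edgeFinset.1 he)]

theorem sum_dart_edge_eq_sum_sum_neighborFinset (f : Sym2 V → M) :
    ∑ d : G.Dart, f d.edge = ∑ v, ∑ u ∈ G.neighborFinset v, f s(v, u) := by
  rw [← sum_fiberwise_of_maps_to (t := univ) (g := fun d : G.Dart => d.fst) fun _ _ => mem_univ _]
  refine sum_congr rfl fun v _ => ?_
  rw [dart_fst_fiber, sum_image fun _ _ _ _ h => G.dartOfNeighborSet_injective v h]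
  exact (sum_subtype _ (fun u => G.mem_neighborFinset v u) (fun u => f s(v, u))).symm

theorem sum_sum_neighborFinset_eq_two_nsmul (f : Sym2 V → M) :
    ∑ v, ∑ u ∈ G.neighborFinset v, f s(v, u) = 2 • ∑ e ∈ G.edgeFinset, f e :=
  (G.sum_dart_edge_eq_sum_sum_neighborFinset f).symm.trans (G.sum_dart_edge f)

end SimpleGraph

theorem abs_sum_star_le_card {V : Type*} {c : Sym2 V → ℤ} (hc : ∀ u v, u ≠ v → |c s(u, v)| ≤ 1)
    {t : Finset V} {v : V} (hv : v ∉ t) : |∑ u ∈ t, c s(v, u)| ≤ #t := by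
  calc |∑ u ∈ t, c s(v, u)| ≤ ∑ u ∈ t, |c s(v, u)| := abs_sum_le_sum_abs _ _
    _ ≤ ∑ u ∈ t, 1 := sum_le_sum fun u hu => hc v u fun h => hv (h ▸ hu)
    _ = #t := by simp

section StarSum

variable {V : Type*} [DecidableEq V] (c : Sym2 V → ℤ)

def innerSum (s : Finset V) : ℤ :=
  ∑ v ∈ s, ∑ u ∈ s.erase v, c s(v, u)

variable {c} in
theorem abs_innerSum_le (hc : ∀ u v, u ≠ v → |c s(u, v)| ≤ 1) (s : Finset V) :
    |innerSum c s| ≤ #s * (#s - 1) := by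
  calc |innerSum c s| ≤ ∑ v ∈ s, |∑ u ∈ s.erase v, c s(v, u)| := abs_sum_le_sum_abs _ _
    _ ≤ ∑ v ∈ s, ((#s : ℤ) - 1) := sum_le_sum fun v hv => by
      simpa [card_erase_of_mem hv, Nat.cast_sub (card_pos.2 ⟨v, hv⟩)]
        using abs_sum_star_le_card hc (notMem_erase v s)
    _ = #s * (#s - 1) := by simp [mul_sub]

variable [Fintype V]

def starSum (v : V) : ℤ :=
  ∑ u ∈ univ.filter (fun u => u ≠ v), c s(v, u)

theorem sum_starSum : ∑ v, starSum c v = 2 * ∑ e ∈ (⊤ : SimpleGraph V).edgeFinset, c e := by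
  have h := (⊤ : SimpleGraph V).sum_sum_neighborFinset_eq_two_nsmul c
  simp only [SimpleGraph.neighborFinset_top, compl_singleton, ← filter_ne', nsmul_eq_mul,
    Nat.cast_ofNat] at h
  exact h

theorem starSum_eq_sum_erase_add_sum_compl {s : Finset V} {v : V} (hv : v ∈ s) :
    starSum c v = ∑ u ∈ s.erase v, c s(v, u) + ∑ u ∈ sᶜ, c s(v, u) := by
  have h := sum_add_sum_compl s fun u => c s(v, u)
  rw [← add_sum_erase s _ hv, ← add_sum_erase univ _ (mem_univ v)] at h
  rw [starSum, filter_ne']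
  linarith

theorem sum_starSum_sub_sum_starSum_compl (s : Finset V) :
    ∑ v ∈ s, starSum c v - ∑ v ∈ sᶜ, starSum c v = innerSum c s - innerSum c sᶜ := by
  have cross : ∑ v ∈ sᶜ, ∑ u ∈ s, c s(v, u) = ∑ v ∈ s, ∑ u ∈ sᶜ, c s(v, u) := by
    rw [sum_comm]
    simp only [Sym2.eq_swap]
  rw [sum_congr rfl fun v hv => starSum_eq_sum_erase_add_sum_compl c hv,
    sum_congr rfl fun v hv => (compl_compl s ▸ starSum_eq_sum_erase_add_sum_compl c hv :),
    sum_add_distrib, sum_add_distrib, innerSum, innerSum, cross]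
  ring

variable {c}

theorem exists_two_mul_abs_starSum_le (hV : 2 ≤ Fintype.card V)
    (hc : ∀ u v, u ≠ v → |c s(u, v)| ≤ 1) (hsum : ∑ v, starSum c v = 0) :
    ∃ v, 2 * |starSum c v| ≤ Fintype.card V - 2 := by
  by_contra! hlarge
  set P := univ.filter fun v => 0 < starSum c v
  set A := ∑ v ∈ P, starSum c v
  have hAc : ∑ v ∈ Pᶜ, starSum c v = -A := by linarith [sum_add_sum_compl P (starSum c)]
  have hA : ∑ v ∈ P, |starSum c v| = A :=
    sum_congr rfl fun v hv => abs_of_pos (mem_filter.1 hv).2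
  have hAc' : ∑ v ∈ Pᶜ, |starSum c v| = A := by
    rw [sum_congr rfl fun v hv => abs_of_nonpos (by simpa [P] using hv), sum_neg_distrib, hAc,
      neg_neg]
  have lower (t : Finset V) :
      #t * ((Fintype.card V : ℤ) - 1) ≤ 2 * ∑ v ∈ t, |starSum c v| := by
    rw [mul_sum, ← nsmul_eq_mul]
    exact card_nsmul_le_sum t _ _ fun v _ => by linarith [hlarge v]
  have lP := hA ▸ lower P
  have lPc := hAc' ▸ lower Pᶜ
  have h2A : 2 * A = innerSum c P - innerSum c Pᶜ := by
    linarith [sum_starSum_sub_sum_starSum_compl c P]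
  have uP := (abs_le.1 (abs_innerSum_le hc P)).2
  have uPc := (abs_le.1 (abs_innerSum_le hc Pᶜ)).1
  have hcard : (#P : ℤ) + #Pᶜ = Fintype.card V := by exact_mod_cast card_add_card_compl P
  have hV' : (2 : ℤ) ≤ Fintype.card V := by exact_mod_cast hV
  rcases (#P).eq_zero_or_pos with hp | hp
  · have : A = 0 := by simp [A, card_eq_zero.1 hp]
    rw [hp, Nat.cast_zero, zero_add] at hcard
    nlinarith
  rcases (#Pᶜ).eq_zero_or_pos with hq | hq
  · have : A = 0 := by simpa [card_eq_zero.1 hq] using hAc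
    rw [hq, Nat.cast_zero, add_zero] at hcard
    nlinarith
  have hpq : (#P : ℤ) ≤ #Pᶜ - 1 := by nlinarith
  have hqp : (#Pᶜ : ℤ) ≤ #P - 1 := by nlinarith
  linarith

end StarSum

theorem stmt_2 (n : ℕ) (hn : 2 ≤ n) (c : Sym2 (Fin n) → ℤ)
    (hc : ∀ e ∈ (⊤ : SimpleGraph (Fin n)).edgeSet, c e = 1 ∨ c e = -1)
    (hzero : ∑ e ∈ (⊤ : SimpleGraph (Fin n)).edgeFinset, c e = 0) :
    ∃ v : Fin n,
      |(∑ u ∈ Finset.univ.filter (fun u => u ≠ v), c s(v, u) : ℤ)| ≤ (n : ℝ)/2 - 1 := by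
  have hc' (u v : Fin n) (huv : u ≠ v) : |c s(u, v)| ≤ 1 := by
    rcases hc s(u, v) (by simpa using huv) with h | h <;> simp [h]
  obtain ⟨v, hv⟩ := exists_two_mul_abs_starSum_le (by simpa using hn) hc'
    (by rw [sum_starSum, hzero, mul_zero])
  refine ⟨v, ?_⟩
  rw [Fintype.card_fin] at hv
  change ((|starSum c v| : ℤ) : ℝ) ≤ _
  have hv' : (2 * |starSum c v| : ℝ) ≤ n - 2 := by exact_mod_cast hv
  linarith
end

section
/- If c : E(K_n) → {-1,1} is a zero-sum labeling of K_n and F is a spanning forest of K_n, then there exists an isomorphic copy F' of F in K_n with |sum of c over E(F')| ≤ Δ(F) + 1. -/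
/-! Averaged over all permutations `σ`, the weight of the copy `σ F` is `0`, because `σ` maps a
fixed edge of `K_n` to every edge equally often. Let `v` be a vertex of degree at most one in the
forest `F`. The transpositions `(v x)` generate the symmetric group, and composing `σ` with one of
them moves at most `deg v + deg x ≤ Δ(F) + 1` edges, so the weight changes by at most
`2 (Δ(F) + 1)`. Walking by such steps from a copy of weight `≤ 0` to one of weight `≥ 0`, the
weight cannot jump over `[-(Δ(F) + 1), Δ(F) + 1]`. -/

open Finset

lemma exists_abs_le_of_closure_eq_top {G : Type*} [Group G] {S : Set G}
    (hS : Subgroup.closure S = ⊤) {f : G → ℤ} {D : ℤ} (hD : 0 ≤ D)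
    (hstep : ∀ g, ∀ s ∈ S, |f (g * s) - f g| ≤ 2 * D) {a b : G} (ha : f a ≤ 0) (hb : 0 ≤ f b) :
    ∃ g, |f g| ≤ D := by
  by_contra! hbig
  -- a step of length at most `2 * D` cannot jump over `[-D, D]`
  have stay : ∀ g g', |f g' - f g| ≤ 2 * D → D < f g → D < f g' := by
    intro g g' hgg' hg
    have := abs_le.mp hgg'
    have := lt_abs.mp (hbig g')
    omega
  have hpos : ∀ x, D < f (b * x) := by
    intro x
    induction (hS ▸ Subgroup.mem_top x : x ∈ Subgroup.closure S) using
      Subgroup.closure_induction_right with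
    | one => have := lt_abs.mp (hbig b); simp only [mul_one]; omega
    | mul_right x _ s hs ih => exact stay _ _ (by simpa [mul_assoc] using hstep (b * x) s hs) ih
    | mul_inv_cancel x _ s hs ih =>
      refine stay _ _ ?_ ih
      simpa [mul_assoc, abs_sub_comm] using hstep (b * x * s⁻¹) s hs
  have := hpos (b⁻¹ * a)
  rw [mul_inv_cancel_left] at this
  omega

namespace Equiv.Perm

variable {α : Type*} [DecidableEq α]

lemma closure_range_swap_eq_top [Finite α] (v : α) :
    Subgroup.closure (Set.range (swap v)) = ⊤ := by
  rw [eq_top_iff, ← closure_isSwap, Subgroup.closure_le]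
  rintro _ ⟨x, y, hxy, rfl⟩
  have mem : ∀ z, swap v z ∈ Subgroup.closure (Set.range (swap v)) :=
    fun z => Subgroup.subset_closure ⟨z, rfl⟩
  by_cases hx : x = v
  · subst hx; exact mem y
  · rw [swap_comm, ← swap_mul_swap_mul_swap hx hxy, swap_comm x v]
    exact mul_mem (mul_mem (mem y) (mem x)) (mem y)

lemma exists_sym2_map_eq {e e' : Sym2 α} (he : ¬e.IsDiag) (he' : ¬e'.IsDiag) :
    ∃ σ : Perm α, e.map σ = e' := by
  induction e using Sym2.ind with | _ a b => ?_
  induction e' using Sym2.ind with | _ x y => ?_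
  rw [Sym2.mk_isDiag_iff] at he he'
  have hb : swap a x b ≠ x := by
    rw [Ne, swap_apply_eq_iff, swap_apply_right]; exact Ne.symm he
  refine ⟨swap (swap a x b) y * swap a x, ?_⟩
  simp [swap_apply_of_ne_of_ne hb.symm he']

end Equiv.Perm

namespace SimpleGraph

open Equiv

variable {V : Type*}

lemma IsAcyclic.exists_degree_le_one [Fintype V] [Nonempty V] {G : SimpleGraph V}
    [DecidableRel G.Adj] (hG : G.IsAcyclic) : ∃ v, G.degree v ≤ 1 := by
  obtain ⟨u, v, p, hp, hmax⟩ := Walk.exists_isPath_forall_isPath_length_le_length G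
  refine ⟨u, ?_⟩
  -- extending a longest path at `u` must revisit it, which acyclicity only allows at `p.snd`
  have hnbr : G.neighborFinset u ⊆ {p.snd} := by
    intro w hw
    rw [mem_neighborFinset] at hw
    have hlong : ¬(p.cons hw.symm).IsPath := fun h => by
      simpa using hmax _ _ _ h
    rw [Walk.cons_isPath_iff, not_and, not_not] at hlong
    exact mem_singleton.mpr (hG.eq_snd_of_adj_start hp hw (hlong hp))
  simpa [card_neighborFinset_eq_degree] using card_le_card hnbr

lemma map_perm_top (σ : Perm V) : (⊤ : SimpleGraph V).map σ = ⊤ := by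
  ext x y
  refine (map_adj σ.toEmbedding ⊤ x y).trans ⟨?_, fun hxy => ?_⟩
  · rintro ⟨u, v, huv, rfl, rfl⟩
    exact σ.injective.ne huv
  · exact ⟨σ.symm x, σ.symm y, σ.symm.injective.ne hxy, σ.apply_symm_apply x,
      σ.apply_symm_apply y⟩

variable [Fintype V] [DecidableEq V]

def copyWeight (c : Sym2 V → ℤ) (G : SimpleGraph V) [DecidableRel G.Adj] (σ : Perm V) : ℤ :=
  ∑ e ∈ G.edgeFinset, c (e.map σ)

lemma sum_edgeFinset_map_eq_copyWeight (c : Sym2 V → ℤ) (G : SimpleGraph V) [DecidableRel G.Adj]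
    (σ : Perm V) : ∑ e ∈ (G.map σ).edgeFinset, c e = copyWeight c G σ := by
  rw [show (G.map σ).edgeFinset = G.edgeFinset.map σ.toEmbedding.sym2Map from
    edgeFinset_map σ.toEmbedding G, sum_map]
  rfl

lemma sum_perm_sym2_map_eq_zero {c : Sym2 V → ℤ}
    (hc : ∑ e ∈ (⊤ : SimpleGraph V).edgeFinset, c e = 0) {e : Sym2 V} (he : ¬e.IsDiag) :
    ∑ σ : Perm V, c (e.map σ) = 0 := by
  have hconst : ∀ e' ∈ (⊤ : SimpleGraph V).edgeFinset,
      ∑ σ : Perm V, c (e'.map σ) = ∑ σ : Perm V, c (e.map σ) := by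
    intro e' he'
    obtain ⟨τ, rfl⟩ := Perm.exists_sym2_map_eq he (by simpa using he')
    refine Fintype.sum_equiv (Equiv.mulRight τ) _ _ fun σ => ?_
    simp [Sym2.map_map]
  have htotal : ∑ e' ∈ (⊤ : SimpleGraph V).edgeFinset, ∑ σ : Perm V, c (e'.map σ) = 0 := by
    rw [sum_comm]
    refine sum_eq_zero fun σ _ => ?_
    change copyWeight c ⊤ σ = 0
    rw [← sum_edgeFinset_map_eq_copyWeight]
    convert hc using 3
    exact map_perm_top σ
  rw [sum_congr rfl hconst, sum_const, nsmul_eq_mul, mul_eq_zero] at htotal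
  refine htotal.resolve_left ?_
  exact_mod_cast (card_pos.mpr ⟨e, by simpa using he⟩).ne'

lemma sum_copyWeight_eq_zero {c : Sym2 V → ℤ}
    (hc : ∑ e ∈ (⊤ : SimpleGraph V).edgeFinset, c e = 0) (G : SimpleGraph V) [DecidableRel G.Adj] :
    ∑ σ : Perm V, copyWeight c G σ = 0 := by
  simp only [copyWeight]
  rw [sum_comm]
  exact sum_eq_zero fun e he =>
    sum_perm_sym2_map_eq_zero hc (G.not_isDiag_of_mem_edgeSet (mem_edgeFinset.mp he))

lemma abs_copyWeight_mul_swap_sub_le {c : Sym2 V → ℤ} (hc : ∀ e, ¬e.IsDiag → |c e| ≤ 1)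
    (G : SimpleGraph V) [DecidableRel G.Adj] (σ : Perm V) (v x : V) :
    |copyWeight c G (σ * swap v x) - copyWeight c G σ| ≤ 2 * (G.degree v + G.degree x) := by
  set t : Sym2 V → ℤ := fun e => c (e.map (σ * swap v x)) - c (e.map σ)
  set I := G.incidenceFinset v ∪ G.incidenceFinset x
  have hI : I ⊆ G.edgeFinset :=
    union_subset (G.incidenceFinset_subset v) (G.incidenceFinset_subset x)
  have ht : ∀ e ∈ G.edgeFinset, |t e| ≤ 2 := fun e he => by
    have hdiag := G.not_isDiag_of_mem_edgeSet (mem_edgeFinset.mp he)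
    have h₁ := hc _ ((Sym2.isDiag_map (σ * swap v x).injective).not.mpr hdiag)
    have h₂ := hc _ ((Sym2.isDiag_map σ.injective).not.mpr hdiag)
    linarith [abs_sub (c (e.map (σ * swap v x))) (c (e.map σ))]
  have hsupp : ∑ e ∈ G.edgeFinset, t e = ∑ e ∈ I, t e := by
    refine (sum_subset hI fun e he hnot => ?_).symm
    have hfix : e.map (swap v x) = e := by
      simp only [I, mem_union, G.incidenceFinset_eq_filter, mem_filter, he, true_and,
        not_or] at hnot
      refine (Sym2.map_congr fun y hy => ?_).trans (congrFun Sym2.map_id' e)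
      exact swap_apply_of_ne_of_ne (ne_of_mem_of_not_mem hy hnot.1)
        (ne_of_mem_of_not_mem hy hnot.2)
    simp only [t, Perm.coe_mul, ← Sym2.map_map, hfix, sub_self]
  calc |copyWeight c G (σ * swap v x) - copyWeight c G σ|
      = |∑ e ∈ I, t e| := by rw [copyWeight, copyWeight, ← sum_sub_distrib, hsupp]
    _ ≤ ∑ e ∈ I, 2 := (abs_sum_le_sum_abs _ _).trans (sum_le_sum fun e he => ht e (hI he))
    _ ≤ 2 * (G.degree v + G.degree x) := by
        rw [sum_const, nsmul_eq_mul, mul_comm, ← card_incidenceFinset_eq_degree,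
          ← card_incidenceFinset_eq_degree]
        exact_mod_cast Nat.mul_le_mul_left 2 (card_union_le _ _)

end SimpleGraph

open scoped Classical

open SimpleGraph Equiv Equiv.Perm in
theorem stmt_7 (n : ℕ) (c : Sym2 (Fin n) → ℤ)
    (hc : ∀ e ∈ (⊤ : SimpleGraph (Fin n)).edgeSet, c e = 1 ∨ c e = -1)
    (hzero : ∑ e ∈ Finset.univ.filter (fun e => e ∈ (⊤ : SimpleGraph (Fin n)).edgeSet), c e = 0)
    (F : SimpleGraph (Fin n)) [DecidableRel F.Adj] (hF : F.IsAcyclic) :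
    ∃ F' : SimpleGraph (Fin n), Nonempty (F ≃g F') ∧
      |∑ e ∈ Finset.univ.filter (fun e => e ∈ F'.edgeSet), c e| ≤ (F.maxDegree : ℤ) + 1 := by
  rcases isEmpty_or_nonempty (Fin n) with hV | hV
  · exact ⟨F, ⟨Iso.refl⟩, by simp⟩
  obtain ⟨v, hv⟩ := hF.exists_degree_le_one
  have hc_abs : ∀ e, ¬e.IsDiag → |c e| ≤ 1 := fun e he => by
    rcases hc e (by simpa using he) with h | h <;> simp [h]
  have hsum := sum_copyWeight_eq_zero (c := c) (by rw [← hzero]; congr 1; ext; simp) F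
  obtain ⟨σlo, -, hσlo⟩ := exists_le_of_sum_le univ_nonempty (hsum.trans (sum_const_zero).symm).le
  obtain ⟨σhi, -, hσhi⟩ := exists_le_of_sum_le univ_nonempty (sum_const_zero.trans hsum.symm).le
  have hstep : ∀ σ, ∀ s ∈ Set.range (swap v),
      |copyWeight c F (σ * s) - copyWeight c F σ| ≤ 2 * ((F.maxDegree : ℤ) + 1) := by
    rintro σ _ ⟨x, rfl⟩
    refine (abs_copyWeight_mul_swap_sub_le hc_abs F σ v x).trans ?_
    have := F.degree_le_maxDegree x
    omega
  obtain ⟨σ, hσ⟩ := exists_abs_le_of_closure_eq_top (closure_range_swap_eq_top v)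
    (by positivity) hstep hσlo hσhi
  refine ⟨F.map σ, ⟨Iso.map σ F⟩, ?_⟩
  rw [← sum_edgeFinset_map_eq_copyWeight] at hσ
  convert hσ using 3
  ext
  simp
end

section
/- Let c : E(K_n) → {-1,1} and suppose F is a P_3-factor of K_n such that no P_3-factor of K_n is zero-sum and c(E(F)) = 2. If u_1u_2u_3 is a path of F with c(u_1u_2) = 1, then c(u_1u_3) = 1. -/
/-! Swapping the last two vertices of the path `u₀u₁u₂` of a `P₃`-factor replaces the path
`u₀u₁u₂` by `u₀u₂u₁`, so the total weight changes by `c(u₀u₂) - c(u₀u₁)`. If `c(u₀u₁) = 1` and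
`c(u₀u₂) = -1`, this turns a factor of weight `2` into a zero-sum one. -/

open Finset

section PathFactor

variable {ι V R : Type*} [AddCommMonoid R]

/-- `g : ι × Fin 3 ≃ V` encodes the `P₃`-factor with paths `g (i, 0) g (i, 1) g (i, 2)`. -/
def pathWeight (c : Sym2 V → R) (g : ι × Fin 3 ≃ V) (i : ι) : R :=
  c s(g (i, 0), g (i, 1)) + c s(g (i, 1), g (i, 2))

def pathFactorWeight [Fintype ι] (c : Sym2 V → R) (g : ι × Fin 3 ≃ V) : R :=
  ∑ i, pathWeight c g i

lemma pathWeight_swap_of_ne [DecidableEq ι] (c : Sym2 V → R) (g : ι × Fin 3 ≃ V) {i j : ι}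
    (hji : j ≠ i) :
    pathWeight c ((Equiv.swap (i, 1) (i, 2)).trans g) j = pathWeight c g j := by
  simp [pathWeight, Equiv.swap_apply_of_ne_of_ne, hji]

lemma pathWeight_swap_self [DecidableEq ι] (c : Sym2 V → R) (g : ι × Fin 3 ≃ V) (i : ι) :
    pathWeight c ((Equiv.swap (i, 1) (i, 2)).trans g) i =
      c s(g (i, 0), g (i, 2)) + c s(g (i, 1), g (i, 2)) := by
  simp [pathWeight, Equiv.swap_apply_of_ne_of_ne, Sym2.eq_swap]

lemma pathFactorWeight_swap [Fintype ι] [DecidableEq ι] (c : Sym2 V → R) (g : ι × Fin 3 ≃ V)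
    (i : ι) :
    pathFactorWeight c ((Equiv.swap (i, 1) (i, 2)).trans g) + c s(g (i, 0), g (i, 1)) =
      pathFactorWeight c g + c s(g (i, 0), g (i, 2)) := by
  rw [pathFactorWeight, pathFactorWeight, ← add_sum_erase _ _ (mem_univ i),
    ← add_sum_erase _ _ (mem_univ i),
    sum_congr rfl fun j hj ↦ pathWeight_swap_of_ne c g (ne_of_mem_erase hj),
    pathWeight_swap_self, pathWeight]
  abel

end PathFactor

theorem stmt_12_general (n m : ℕ)
    (c : Sym2 (Fin n) → ℤ)
    (hc : ∀ e ∈ (⊤ : SimpleGraph (Fin n)).edgeSet, c e = 1 ∨ c e = -1)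
    (hnozero : ∀ g' : Fin m × Fin 3 ≃ Fin n,
      ∑ i : Fin m, (c s(g' (i, 0), g' (i, 1)) + c s(g' (i, 1), g' (i, 2))) ≠ 0)
    (g : Fin m × Fin 3 ≃ Fin n)
    (hF : ∑ i : Fin m, (c s(g (i, 0), g (i, 1)) + c s(g (i, 1), g (i, 2))) = 2)
    (i : Fin m) (h1 : c s(g (i, 0), g (i, 1)) = 1) :
    c s(g (i, 0), g (i, 2)) = 1 := by
  have hne : g (i, 0) ≠ g (i, 2) := g.injective.ne (by simp)
  rcases hc s(g (i, 0), g (i, 2)) (by simp [hne]) with h02 | h02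
  · exact h02
  refine absurd ?_ (hnozero ((Equiv.swap (i, 1) (i, 2)).trans g))
  change pathFactorWeight c g = 2 at hF
  have hswap := pathFactorWeight_swap c g i
  rw [h1, h02, hF] at hswap
  change pathFactorWeight c _ = 0
  linarith

theorem stmt_12 (n m : ℕ) (hn : n = 3 * m)
    (c : Sym2 (Fin n) → ℤ)
    (hc : ∀ e ∈ (⊤ : SimpleGraph (Fin n)).edgeSet, c e = 1 ∨ c e = -1)
    (hnozero : ∀ g' : Fin m × Fin 3 ≃ Fin n,
      ∑ i : Fin m, (c s(g' (i, 0), g' (i, 1)) + c s(g' (i, 1), g' (i, 2))) ≠ 0)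
    (g : Fin m × Fin 3 ≃ Fin n)
    (hF : ∑ i : Fin m, (c s(g (i, 0), g (i, 1)) + c s(g (i, 1), g (i, 2))) = 2)
    (i : Fin m) (h1 : c s(g (i, 0), g (i, 1)) = 1) :
    c s(g (i, 0), g (i, 2)) = 1 :=
  stmt_12_general n m c hc hnozero g hF i h1
end
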